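/- For every real number P ≥ 0, one has min{ 3·C(P), 2·C(2P) } − max{ min{ C(3P), (3/2)·C(P) }, 2·min{ max(C((3P)/2 − 1/2), 0), C(P) } } ≤ 1. -/

import Mathlib

/-!
For `P ≥ 1/3` compare the cut-set bound `2 C(2P)` with the functional decode-and-forward rate
`2 min {C(3P/2 - 1/2), C(P)}`: both `1 + (3P/2 - 1/2)` and `1 + P` are at least half of `1 + 2P`,
so each of the two terms loses at most half a bit. For `P ≤ 1/3` compare `3 C(P)` with the complete
decode-and-forward rate `min {C(3P), (3/2) C(P)}`: here `(1 + P)³ ≤ 4 (1 + 3P)` and `C(P) ≤ C(1) = 1/2`.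
-/

/-- The Gaussian capacity function C(x) = (1/2)·log₂(1 + x). -/
noncomputable def Cap (x : ℝ) : ℝ := (1/2) * Real.logb 2 (1 + x)

open Real

lemma Cap_nonneg {x : ℝ} (hx : 0 ≤ x) : 0 ≤ Cap x := by
  unfold Cap
  have := logb_nonneg one_lt_two (by linarith : (1 : ℝ) ≤ 1 + x)
  positivity

lemma Cap_le_Cap {x y : ℝ} (hx : -1 < x) (hxy : x ≤ y) : Cap x ≤ Cap y := by
  unfold Cap
  gcongr
  · norm_num
  · linarith

lemma Cap_one : Cap 1 = 1 / 2 := by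
  norm_num [Cap]

lemma natCast_mul_Cap (n : ℕ) (x : ℝ) : n * Cap x = Cap ((1 + x) ^ n - 1) := by
  simp only [Cap, add_sub_cancel, logb_pow]
  ring

lemma Cap_sub_Cap_le {x y : ℝ} (k : ℕ) (hx : -1 < x) (hy : -1 < y)
    (h : 1 + x ≤ 2 ^ k * (1 + y)) : Cap x - Cap y ≤ k / 2 := by
  have hlog : logb 2 (1 + x) ≤ k + logb 2 (1 + y) :=
    calc logb 2 (1 + x) ≤ logb 2 (2 ^ k * (1 + y)) :=
          logb_le_logb_of_le one_lt_two (by linarith) h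
      _ = k + logb 2 (1 + y) := by
          rw [logb_mul (by positivity) (by linarith), logb_pow, logb_self_eq_one one_lt_two,
            mul_one]
  unfold Cap
  linarith

lemma two_mul_Cap_two_mul_sub_le_one {P : ℝ} (hP : 1 / 3 ≤ P) :
    2 * Cap (2 * P) - 2 * min (max (Cap (3 * P / 2 - 1 / 2)) 0) (Cap P) ≤ 1 := by
  have hfdf : Cap (2 * P) - Cap (3 * P / 2 - 1 / 2) ≤ 1 / 2 := by
    simpa using Cap_sub_Cap_le 1 (by linarith) (by linarith) (by linarith)
  have hcut : Cap (2 * P) - Cap P ≤ 1 / 2 := by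
    simpa using Cap_sub_Cap_le 1 (by linarith) (by linarith) (by linarith)
  rw [max_eq_left (Cap_nonneg (by linarith))]
  rcases min_choice (Cap (3 * P / 2 - 1 / 2)) (Cap P) with h | h <;> rw [h] <;> linarith

lemma three_mul_Cap_sub_le_one {P : ℝ} (hP₀ : 0 ≤ P) (hP : P ≤ 1 / 3) :
    3 * Cap P - min (Cap (3 * P)) (3 / 2 * Cap P) ≤ 1 := by
  have hcube : 3 * Cap P - Cap (3 * P) ≤ 1 := by
    have hcube_pos : 0 < (1 + P) ^ 3 := by positivity
    have h := Cap_sub_Cap_le 2 (x := (1 + P) ^ 3 - 1) (y := 3 * P) (by linarith) (by linarith)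
      (by nlinarith [mul_nonneg hP₀ hP₀])
    rw [← natCast_mul_Cap] at h
    norm_num at h
    linarith
  have hhalf : Cap P ≤ 1 / 2 := Cap_one ▸ Cap_le_Cap (by linarith) (by linarith)
  rcases min_choice (Cap (3 * P)) (3 / 2 * Cap P) with h | h <;> rw [h] <;> linarith

/-- Gap of less than one bit for the symmetric Y-channel with P = P_r. -/
theorem symmetric_gap (P : ℝ) (hP : P ≥ 0) :
    min (3 * Cap P) (2 * Cap (2 * P))
      - max (min (Cap (3 * P)) ((3/2) * Cap P))
          (2 * min (max (Cap ((3 * P) / 2 - 1/2)) 0) (Cap P)) ≤ 1 := by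
  rcases le_total (1 / 3 : ℝ) P with hhigh | hlow
  · have := two_mul_Cap_two_mul_sub_le_one hhigh
    have := min_le_right (3 * Cap P) (2 * Cap (2 * P))
    have := le_max_right (min (Cap (3 * P)) ((3/2) * Cap P))
      (2 * min (max (Cap ((3 * P) / 2 - 1/2)) 0) (Cap P))
    linarith
  · have := three_mul_Cap_sub_le_one hP hlow
    have := min_le_left (3 * Cap P) (2 * Cap (2 * P))
    have := le_max_left (min (Cap (3 * P)) ((3/2) * Cap P))
      (2 * min (max (Cap ((3 * P) / 2 - 1/2)) 0) (Cap P))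
    linarith
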